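/- For every n, the n-th approximant 𝐜_n = (c_n, c_n) of the 2-dimensional Cantor function maps each of the 4ⁿ squares of CD_n (each of edge 3⁻ⁿ) affinely onto a dyadic square of edge 2⁻ⁿ in [0,1]², and the images of these 4ⁿ squares form exactly the 2ⁿ-fold dyadic subdivision of [0,1]²; in particular 𝐜_n restricted to CD_n is surjective onto [0,1]². -/

import Mathlib

/-!
Everything splits into coordinates: each `ifsMap` is a pair of contractions
`x ↦ x / 3 + 2 b / 3` with `b ∈ {0, 1}`, and `cmap n` is `cseq n` in each coordinate.
On `[0, 1]` one step of the recursion undoes one contraction,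
`cseq (n + 1) (x / 3 + 2 b / 3) = (b + cseq n x) / 2`, so along a binary word `t` of length `n`
the map `cseq n` is affine of slope `(3 / 2) ^ n` on the interval `f_t [0, 1]` and sends it onto
`[k / 2 ^ n, (k + 1) / 2 ^ n]`, where `k` is `t` read as a binary numeral. Since words over four
letters are pairs of binary words and binary numerals of length `n` are exactly `0, …, 2 ^ n - 1`,
the squares of `CD_n` are sent onto all dyadic squares.
-/

/-- The approximating sequence of the Cantor function. -/
noncomputable def cseq : ℕ → ℝ → ℝ
  | 0 => fun x => x
  | n + 1 => fun x =>
      if x ≤ 1/3 then cseq n (3 * x) / 2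
      else if x ≤ 2/3 then 1/2
      else cseq n (3 * x - 2) / 2 + 1/2

/-- The `n`-th approximant of the 2-dimensional Cantor function. -/
noncomputable def cmap (n : ℕ) (p : ℝ × ℝ) : ℝ × ℝ := (cseq n p.1, cseq n p.2)

/-- The four similitudes of the Cantor-dust IFS. -/
noncomputable def ifsMap : Fin 4 → ℝ × ℝ → ℝ × ℝ
  | 0 => fun p => (p.1 / 3, p.2 / 3)
  | 1 => fun p => (p.1 / 3, p.2 / 3 + 2/3)
  | 2 => fun p => (p.1 / 3 + 2/3, p.2 / 3)
  | 3 => fun p => (p.1 / 3 + 2/3, p.2 / 3 + 2/3)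

/-- `f_𝐬 = f_{s₁} ∘ ⋯ ∘ f_{sₙ}`. -/
noncomputable def ifsComp {n : ℕ} (s : Fin n → Fin 4) : ℝ × ℝ → ℝ × ℝ :=
  (List.ofFn s).foldr (fun i g => ifsMap i ∘ g) id

/-- A dyadic square of edge `2⁻ⁿ` with lower-left corner `(i/2ⁿ, j/2ⁿ)`. -/
noncomputable def dyadicSq (n i j : ℕ) : Set (ℝ × ℝ) :=
  Set.Icc ((i : ℝ) / 2 ^ n, (j : ℝ) / 2 ^ n) (((i : ℝ) + 1) / 2 ^ n, ((j : ℝ) + 1) / 2 ^ n)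

open Set

noncomputable def cantorMap (b : Fin 2) (x : ℝ) : ℝ := x / 3 + 2 * b / 3

noncomputable def cantorComp {n : ℕ} (t : Fin n → Fin 2) : ℝ → ℝ :=
  (List.ofFn t).foldr (fun b g => cantorMap b ∘ g) id

/-- Reads a word as a binary numeral, most significant digit first. -/
def binaryIndex {n : ℕ} : (Fin n → Fin 2) ≃ Fin (2 ^ n) :=
  (Equiv.arrowCongr Fin.revPerm (Equiv.refl (Fin 2))).trans finFunctionFinEquiv

lemma binaryIndex_succ {n : ℕ} (t : Fin (n + 1) → Fin 2) :
    (binaryIndex t : ℕ) = t 0 * 2 ^ n + binaryIndex (Fin.tail t) := by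
  simp only [binaryIndex, Equiv.trans_apply, finFunctionFinEquiv_apply_val, Equiv.arrowCongr_apply,
    Equiv.coe_refl, Fin.revPerm_symm, Function.comp_apply, Fin.revPerm_apply, id_eq,
    Fin.sum_univ_castSucc, Fin.rev_castSucc, Fin.val_castSucc, Fin.rev_last, Fin.val_last, Fin.tail]
  ring

lemma cantorComp_succ {n : ℕ} (t : Fin (n + 1) → Fin 2) :
    cantorComp t = cantorMap (t 0) ∘ cantorComp (Fin.tail t) := by
  simp only [cantorComp, List.ofFn_succ, List.foldr_cons]
  rfl

lemma cantorComp_apply {n : ℕ} (t : Fin n → Fin 2) (x : ℝ) :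
    cantorComp t x = x / 3 ^ n + cantorComp t 0 := by
  induction n with
  | zero => simp [cantorComp]
  | succ n ih =>
    simp only [cantorComp_succ t, Function.comp_apply, cantorMap]
    rw [ih]
    ring

lemma cantorMap_mem_Icc (b : Fin 2) {x : ℝ} (hx : x ∈ Icc 0 1) : cantorMap b x ∈ Icc 0 1 := by
  have hb : (b : ℝ) ≤ 1 := by exact_mod_cast Nat.le_of_lt_succ b.isLt
  constructor <;> unfold cantorMap <;> linarith [hx.1, hx.2, (Nat.cast_nonneg b : (0 : ℝ) ≤ b)]

lemma cantorComp_mem_Icc {n : ℕ} (t : Fin n → Fin 2) {x : ℝ} (hx : x ∈ Icc 0 1) :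
    cantorComp t x ∈ Icc 0 1 := by
  induction n with
  | zero => simpa [cantorComp]
  | succ n ih => exact cantorComp_succ t ▸ cantorMap_mem_Icc _ (ih _)

lemma cseq_zero_right (n : ℕ) : cseq n 0 = 0 := by
  induction n with
  | zero => rfl
  | succ n ih => simp [cseq, ih]

/-- At `x = 0`, `b = 1` the middle branch of `cseq (n + 1)` is taken; it still gives the
right value because `cseq n 0 = 0`. -/
lemma cseq_succ_cantorMap (n : ℕ) (b : Fin 2) {x : ℝ} (hx : x ∈ Icc 0 1) :
    cseq (n + 1) (cantorMap b x) = (b + cseq n x) / 2 := by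
  obtain ⟨hx0, hx1⟩ := hx
  obtain rfl | rfl : b = 0 ∨ b = 1 := by omega
  · have hmap : cantorMap 0 x = x / 3 := by simp [cantorMap]
    rw [hmap, cseq]
    beta_reduce
    rw [if_pos (by linarith), show 3 * (x / 3) = x by ring]
    simp
  · have hmap : cantorMap 1 x = x / 3 + 2 / 3 := by simp [cantorMap]
    rw [hmap, cseq]
    beta_reduce
    rw [if_neg (by linarith)]
    rcases hx0.eq_or_lt with rfl | hpos
    · norm_num [cseq_zero_right]
    · rw [if_neg (by linarith), show 3 * (x / 3 + 2 / 3) - 2 = x by ring, Fin.val_one,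
        Nat.cast_one]
      ring

lemma cseq_cantorComp {n : ℕ} (t : Fin n → Fin 2) {x : ℝ} (hx : x ∈ Icc 0 1) :
    cseq n (cantorComp t x) = (binaryIndex t + x) / 2 ^ n := by
  induction n with
  | zero => simp [cantorComp, cseq]
  | succ n ih =>
    rw [cantorComp_succ, binaryIndex_succ, Function.comp_apply,
      cseq_succ_cantorMap n _ (cantorComp_mem_Icc _ hx), ih]
    field_simp
    push_cast
    ring

lemma cseq_image_cantorComp {n : ℕ} (t : Fin n → Fin 2) :
    cseq n '' (cantorComp t '' Icc 0 1) =
      Icc ((binaryIndex t : ℝ) / 2 ^ n) ((binaryIndex t + 1) / 2 ^ n) := by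
  rw [image_image, image_congr fun x hx => cseq_cantorComp t hx,
    show (fun x : ℝ => (((binaryIndex t : ℕ) : ℝ) + x) / 2 ^ n) =
      fun x : ℝ => (2 ^ n)⁻¹ * x + ((binaryIndex t : ℕ) : ℝ) / 2 ^ n by ext; ring,
    image_affine_Icc' (by positivity)]
  congr 1 <;> ring

lemma exists_eqOn_cseq_cantorComp_image {n : ℕ} (t : Fin n → Fin 2) :
    ∃ d : ℝ, EqOn (cseq n) (fun y => (3 / 2) ^ n * y + d) (cantorComp t '' Icc 0 1) := by
  refine ⟨(binaryIndex t - 3 ^ n * cantorComp t 0) / 2 ^ n, ?_⟩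
  rintro _ ⟨x, hx, rfl⟩
  rw [cseq_cantorComp t hx, cantorComp_apply t x, div_pow]
  field_simp
  ring

lemma exists_lt_mem_Icc_natCast {N : ℕ} (hN : 0 < N) {y : ℝ} (hy : y ∈ Icc (0 : ℝ) N) :
    ∃ i < N, y ∈ Icc (i : ℝ) (i + 1) := by
  obtain ⟨hy0, hyN⟩ := hy
  rcases hy0.eq_or_lt with rfl | hpos
  · exact ⟨0, hN, by simp⟩
  have hceil : 1 ≤ ⌈y⌉₊ := Nat.ceil_pos.2 hpos
  refine ⟨⌈y⌉₊ - 1, by have := Nat.ceil_le.2 hyN; omega, ?_, ?_⟩ <;>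
    rw [Nat.cast_sub hceil, Nat.cast_one]
  · linarith [Nat.ceil_lt_add_one hy0]
  · linarith [Nat.le_ceil y]

lemma exists_lt_mem_Icc_dyadic (n : ℕ) {x : ℝ} (hx : x ∈ Icc (0 : ℝ) 1) :
    ∃ i : ℕ, i < 2 ^ n ∧ x ∈ Icc ((i : ℝ) / 2 ^ n) ((i + 1) / 2 ^ n) := by
  have h2 : (0 : ℝ) < 2 ^ n := by positivity
  obtain ⟨i, hi, hi₁, hi₂⟩ := exists_lt_mem_Icc_natCast (N := 2 ^ n) (by positivity)
    (y := x * 2 ^ n) ⟨by nlinarith [hx.1], by push_cast; nlinarith [hx.2]⟩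
  exact ⟨i, hi, (div_le_iff₀ h2).2 hi₁, (le_div_iff₀ h2).2 hi₂⟩

lemma Icc_dyadic_subset_Icc {n i : ℕ} (hi : i < 2 ^ n) :
    Icc ((i : ℝ) / 2 ^ n) ((i + 1) / 2 ^ n) ⊆ Icc 0 1 := by
  have h2 : (0 : ℝ) < 2 ^ n := by positivity
  have hi' : (i : ℝ) + 1 ≤ 2 ^ n := by exact_mod_cast hi
  exact Icc_subset_Icc (by positivity) ((div_le_one h2).2 hi')

lemma exists_mem_dyadicSq (n : ℕ) {p : ℝ × ℝ} (hp : p ∈ Icc ((0 : ℝ), (0 : ℝ)) (1, 1)) :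
    ∃ i j : ℕ, i < 2 ^ n ∧ j < 2 ^ n ∧ p ∈ dyadicSq n i j := by
  rw [Icc_prod_eq] at hp
  obtain ⟨i, hi, hpi⟩ := exists_lt_mem_Icc_dyadic n hp.1
  obtain ⟨j, hj, hpj⟩ := exists_lt_mem_Icc_dyadic n hp.2
  exact ⟨i, j, hi, hj, by rw [dyadicSq, Icc_prod_eq]; exact ⟨hpi, hpj⟩⟩

lemma dyadicSq_subset_Icc {n i j : ℕ} (hi : i < 2 ^ n) (hj : j < 2 ^ n) :
    dyadicSq n i j ⊆ Icc ((0 : ℝ), (0 : ℝ)) (1, 1) := by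
  rw [dyadicSq, Icc_prod_eq, Icc_prod_eq]
  exact prod_mono (Icc_dyadic_subset_Icc hi) (Icc_dyadic_subset_Icc hj)

def letterEquiv : Fin 2 × Fin 2 ≃ Fin 4 := finProdFinEquiv

def wordEquiv {n : ℕ} : (Fin n → Fin 2) × (Fin n → Fin 2) ≃ (Fin n → Fin 4) :=
  (Equiv.arrowProdEquivProdArrow _ _ _).symm.trans (Equiv.arrowCongr (Equiv.refl _) letterEquiv)

lemma ifsMap_letterEquiv (a b : Fin 2) :
    ifsMap (letterEquiv (a, b)) = Prod.map (cantorMap a) (cantorMap b) := by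
  fin_cases a <;> fin_cases b <;> ext p <;>
    simp [ifsMap, cantorMap, letterEquiv, finProdFinEquiv]

lemma ifsComp_succ {n : ℕ} (s : Fin (n + 1) → Fin 4) :
    ifsComp s = ifsMap (s 0) ∘ ifsComp (Fin.tail s) := by
  simp only [ifsComp, List.ofFn_succ, List.foldr_cons]
  rfl

lemma ifsComp_wordEquiv {n : ℕ} (t u : Fin n → Fin 2) :
    ifsComp (wordEquiv (t, u)) = Prod.map (cantorComp t) (cantorComp u) := by
  induction n with
  | zero => rfl
  | succ n ih =>
    rw [ifsComp_succ, cantorComp_succ t, cantorComp_succ u, ← Prod.map_comp_map,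
      ← ih, ← ifsMap_letterEquiv]
    rfl

lemma cmap_image_ifsComp {n : ℕ} (t u : Fin n → Fin 2) :
    cmap n '' (ifsComp (wordEquiv (t, u)) '' Icc ((0 : ℝ), (0 : ℝ)) (1, 1)) =
      dyadicSq n (binaryIndex t) (binaryIndex u) := by
  rw [ifsComp_wordEquiv, Icc_prod_eq, prodMap_image_prod,
    show cmap n = Prod.map (cseq n) (cseq n) from rfl, prodMap_image_prod,
    cseq_image_cantorComp, cseq_image_cantorComp, dyadicSq, Icc_prod_eq]

lemma exists_affineMap_eqOn_ifsComp_image {n : ℕ} (t u : Fin n → Fin 2) :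
    ∃ A : ℝ × ℝ →ᵃ[ℝ] ℝ × ℝ, EqOn (cmap n) A (ifsComp (wordEquiv (t, u)) '' Icc (0, 0) (1, 1)) := by
  obtain ⟨d₁, hd₁⟩ := exists_eqOn_cseq_cantorComp_image t
  obtain ⟨d₂, hd₂⟩ := exists_eqOn_cseq_cantorComp_image u
  refine ⟨(3 / 2 : ℝ) ^ n • AffineMap.id ℝ (ℝ × ℝ) + AffineMap.const ℝ (ℝ × ℝ) (d₁, d₂), ?_⟩
  rw [ifsComp_wordEquiv, Icc_prod_eq, prodMap_image_prod]
  rintro p ⟨hp₁, hp₂⟩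
  ext <;> simp [cmap, hd₁ hp₁, hd₂ hp₂]

lemma exists_cmap_image_ifsComp_eq_dyadicSq {n i j : ℕ} (hi : i < 2 ^ n) (hj : j < 2 ^ n) :
    ∃ s : Fin n → Fin 4, cmap n '' (ifsComp s '' Icc ((0 : ℝ), (0 : ℝ)) (1, 1)) = dyadicSq n i j :=
  ⟨wordEquiv (binaryIndex.symm ⟨i, hi⟩, binaryIndex.symm ⟨j, hj⟩), by simp [cmap_image_ifsComp]⟩

theorem stmt12 (n : ℕ) :
    (∀ s : Fin n → Fin 4, ∃ i j : ℕ, i < 2 ^ n ∧ j < 2 ^ n ∧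
      (∃ A : ℝ × ℝ →ᵃ[ℝ] ℝ × ℝ,
        ∀ p ∈ ifsComp s '' Set.Icc ((0 : ℝ), (0 : ℝ)) (1, 1), cmap n p = A p) ∧
      cmap n '' (ifsComp s '' Set.Icc ((0 : ℝ), (0 : ℝ)) (1, 1)) = dyadicSq n i j) ∧
    (∀ i j : ℕ, i < 2 ^ n → j < 2 ^ n → ∃ s : Fin n → Fin 4,
      cmap n '' (ifsComp s '' Set.Icc ((0 : ℝ), (0 : ℝ)) (1, 1)) = dyadicSq n i j) ∧
    cmap n '' (⋃ s : Fin n → Fin 4, ifsComp s '' Set.Icc ((0 : ℝ), (0 : ℝ)) (1, 1)) =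
      Set.Icc ((0 : ℝ), (0 : ℝ)) (1, 1) := by
  refine ⟨fun s => ?_, fun i j => exists_cmap_image_ifsComp_eq_dyadicSq, ?_⟩
  · obtain ⟨⟨t, u⟩, rfl⟩ := wordEquiv.surjective s
    exact ⟨_, _, (binaryIndex t).isLt, (binaryIndex u).isLt,
      exists_affineMap_eqOn_ifsComp_image t u, cmap_image_ifsComp t u⟩
  rw [image_iUnion]
  refine (iUnion_subset fun s => ?_).antisymm fun p hp => ?_
  · obtain ⟨⟨t, u⟩, rfl⟩ := wordEquiv.surjective s
    rw [cmap_image_ifsComp]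
    exact dyadicSq_subset_Icc (binaryIndex t).isLt (binaryIndex u).isLt
  · obtain ⟨i, j, hi, hj, hp⟩ := exists_mem_dyadicSq n hp
    obtain ⟨s, hs⟩ := exists_cmap_image_ifsComp_eq_dyadicSq hi hj
    exact mem_iUnion.2 ⟨s, hs ▸ hp⟩
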